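/- Let R be a strongly ℤ-graded ring with grading 𝒜. Then for all a, b, k, ℓ ∈ ℤ the following identities of products of ℤ-submodules of R hold: R_{≤a} * R_{≤b} = R_{≤a+b}; R_{≥a} * R_{≥b} = R_{≥a+b}; R_{≤ℓ} * 𝒜 k = R_{≤ℓ+k}; R_{≥−k} * 𝒜 (−ℓ) = R_{≥−k−ℓ}. Consequently R_{≤k} * ⊤ = ⊤ and R_{≥−ℓ} * ⊤ = ⊤, i.e. every element of R is a finite sum of products of an element of R_{≤k} (respectively R_{≥−ℓ}) with an element of R. -/
import Mathlib


/-- A ℤ-graded ring is *strongly graded* if `𝒜 i * 𝒜 j = 𝒜 (i + j)` for all `i j`. -/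
def IsStronglyGraded {R : Type*} [Ring R] (𝒜 : ℤ → Submodule ℤ R) : Prop :=
  ∀ i j : ℤ, 𝒜 i * 𝒜 j = 𝒜 (i + j)

variable {R : Type*} [Ring R] (𝒜 : ℤ → Submodule ℤ R) [GradedRing 𝒜]

/-- `R_{≤k}`, the sum of the homogeneous components of degree at most `k`. -/
def Rle (k : ℤ) : Submodule ℤ R := ⨆ n ≤ k, 𝒜 n

/-- `R_{≥k}`, the sum of the homogeneous components of degree at least `k`. -/
def Rge (k : ℤ) : Submodule ℤ R := ⨆ n ≥ k, 𝒜 n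

lemma grade_le_Rle {m k : ℤ} (hm : m ≤ k) : 𝒜 m ≤ Rle 𝒜 k :=
  le_iSup₂_of_le m hm le_rfl

lemma grade_le_Rge {m k : ℤ} (hm : k ≤ m) : 𝒜 m ≤ Rge 𝒜 k :=
  le_iSup₂_of_le m hm le_rfl

lemma Rle_mono {c d : ℤ} (hcd : c ≤ d) : Rle 𝒜 c ≤ Rle 𝒜 d :=
  iSup₂_le fun n hn => grade_le_Rle 𝒜 (hn.trans hcd)

lemma Rge_mono {c d : ℤ} (hcd : d ≤ c) : Rge 𝒜 c ≤ Rge 𝒜 d :=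
  iSup₂_le fun n hn => grade_le_Rge 𝒜 (hcd.trans hn)

lemma Rle_mul_grade (h : IsStronglyGraded 𝒜) (a b : ℤ) :
    Rle 𝒜 a * 𝒜 b = Rle 𝒜 (a + b) := by
  rw [Rle]
  simp only [Submodule.iSup_mul, h]
  apply le_antisymm
  · exact iSup₂_le fun n hn => by rw [h]; exact grade_le_Rle 𝒜 (by omega)
  · refine iSup₂_le fun m hm => le_iSup₂_of_le (m - b) (by omega) ?_
    rw [h, sub_add_cancel]

lemma Rge_mul_grade (h : IsStronglyGraded 𝒜) (a b : ℤ) :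
    Rge 𝒜 a * 𝒜 b = Rge 𝒜 (a + b) := by
  rw [Rge]
  simp only [Submodule.iSup_mul, h]
  apply le_antisymm
  · exact iSup₂_le fun n hn => by rw [h]; exact grade_le_Rge 𝒜 (by omega)
  · refine iSup₂_le fun m hm => le_iSup₂_of_le (m - b) (by omega) ?_
    rw [h, sub_add_cancel]

lemma Rle_mul_Rle (h : IsStronglyGraded 𝒜) (a b : ℤ) :
    Rle 𝒜 a * Rle 𝒜 b = Rle 𝒜 (a + b) := by
  rw [show Rle 𝒜 b = ⨆ n ≤ b, 𝒜 n from rfl, Submodule.mul_iSup]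
  simp_rw [Submodule.mul_iSup, Rle_mul_grade 𝒜 h]
  apply le_antisymm
  · exact iSup₂_le fun n hn => Rle_mono 𝒜 (by omega)
  · exact le_iSup₂_of_le b le_rfl le_rfl

lemma Rge_mul_Rge (h : IsStronglyGraded 𝒜) (a b : ℤ) :
    Rge 𝒜 a * Rge 𝒜 b = Rge 𝒜 (a + b) := by
  rw [show Rge 𝒜 b = ⨆ n ≥ b, 𝒜 n from rfl, Submodule.mul_iSup]
  simp_rw [Submodule.mul_iSup, Rge_mul_grade 𝒜 h]
  apply le_antisymm
  · exact iSup₂_le fun n hn => Rge_mono 𝒜 (by omega)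
  · exact le_iSup₂_of_le b le_rfl le_rfl

lemma top_eq_iSup : (⊤ : Submodule ℤ R) = ⨆ n, 𝒜 n :=
  ((DirectSum.Decomposition.isInternal 𝒜).submodule_iSup_eq_top).symm

/-- In a strongly ℤ-graded ring: `R_{≤a} * R_{≤b} = R_{≤a+b}`,
`R_{≥a} * R_{≥b} = R_{≥a+b}`, `R_{≤ℓ} * 𝒜 k = R_{≤ℓ+k}` and
`R_{≥-k} * 𝒜 (-ℓ) = R_{≥-k-ℓ}`; consequently `R_{≤k} * ⊤ = ⊤` and
`R_{≥-ℓ} * ⊤ = ⊤`. -/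
theorem strongly_graded_products (h : IsStronglyGraded 𝒜) :
    (∀ a b : ℤ, Rle 𝒜 a * Rle 𝒜 b = Rle 𝒜 (a + b)) ∧
    (∀ a b : ℤ, Rge 𝒜 a * Rge 𝒜 b = Rge 𝒜 (a + b)) ∧
    (∀ l k : ℤ, Rle 𝒜 l * 𝒜 k = Rle 𝒜 (l + k)) ∧
    (∀ k l : ℤ, Rge 𝒜 (-k) * 𝒜 (-l) = Rge 𝒜 (-k - l)) ∧
    (∀ k : ℤ, Rle 𝒜 k * (⊤ : Submodule ℤ R) = ⊤) ∧
    (∀ l : ℤ, Rge 𝒜 (-l) * (⊤ : Submodule ℤ R) = ⊤) := by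
  refine ⟨Rle_mul_Rle 𝒜 h, Rge_mul_Rge 𝒜 h, Rle_mul_grade 𝒜 h,
      fun k l => by rw [Rge_mul_grade 𝒜 h]; ring_nf, fun k => ?_, fun l => ?_⟩
  · refine le_antisymm le_top ?_
    rw [top_eq_iSup 𝒜, Submodule.mul_iSup]
    simp_rw [Rle_mul_grade 𝒜 h]
    exact iSup_le fun m => le_iSup_of_le (m - k) (grade_le_Rle 𝒜 (by omega))
  · refine le_antisymm le_top ?_
    rw [top_eq_iSup 𝒜, Submodule.mul_iSup]
    simp_rw [Rge_mul_grade 𝒜 h]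
    exact iSup_le fun m => le_iSup_of_le (m + l) (grade_le_Rge 𝒜 (by omega))
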